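/- arXiv:2109.06656 — 2 statements merged into one kernel-verified Lean document; each statement's English description precedes it below -/
import Mathlib

section
/- For single-agent information structures u, v ∈ Δ(K × C) (K, C finite), the single-agent value-based distance satisfies d₁(u,v) = max( min over garblings q of ‖q.u - v‖₁ , min over garblings q of ‖q.v - u‖₁ ), where (q.u)(k,c) = Σ_{c'} u(k,c') q(c|c'). -/
open scoped BigOperators

noncomputable section

/-- A probability distribution on a finite type, given as a nonnegative function summing to 1. -/
def IsDist {α : Type*} [Fintype α] (u : α → ℝ) : Prop :=
  (∀ a, 0 ≤ u a) ∧ ∑ a, u a = 1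

/-- A garbling (stochastic map / behavioral strategy). -/
def IsKernel {α β : Type*} [Fintype β] (q : α → β → ℝ) : Prop :=
  ∀ a, IsDist (q a)

/-- Expected payoff in the zero-sum Bayesian game `Γ(u,g)` when players use
behavioral strategies `σ` and `τ`. -/
def pay {K C D I J : Type*} [Fintype K] [Fintype C] [Fintype D] [Fintype I] [Fintype J]
    (u : K × C × D → ℝ) (g : K → I → J → ℝ) (σ : C → I → ℝ) (τ : D → J → ℝ) : ℝ :=
  ∑ k, ∑ c, ∑ d, ∑ i, ∑ j, u (k, c, d) * σ c i * τ d j * g k i j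

/-- The value (maxmin) of the zero-sum Bayesian game `Γ(u,g)`, player 1 maximizing. -/
def gameVal {K C D I J : Type*} [Fintype K] [Fintype C] [Fintype D] [Fintype I] [Fintype J]
    (u : K × C × D → ℝ) (g : K → I → J → ℝ) : ℝ :=
  sSup {x : ℝ | ∃ σ : C → I → ℝ, IsKernel σ ∧
    x = sInf {y : ℝ | ∃ τ : D → J → ℝ, IsKernel τ ∧ y = pay u g σ τ}}

/-- Garbling of player 1's signal: `(q.u)(k,c,d) = ∑ c', u(k,c',d) q(c|c')`. -/
def garbleL {K C C' D : Type*} [Fintype C] (q : C → C' → ℝ) (u : K × C × D → ℝ) :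
    K × C' × D → ℝ :=
  fun x => ∑ c, u (x.1, c, x.2.2) * q c x.2.1

/-- Garbling of player 2's signal: `(u.q)(k,c,d) = ∑ d', u(k,c,d') q(d|d')`. -/
def garbleR {K C D D' : Type*} [Fintype D] (q : D → D' → ℝ) (u : K × C × D → ℝ) :
    K × C × D' → ℝ :=
  fun x => ∑ d, u (x.1, x.2.1, d) * q d x.2.2

/-- ℓ¹ distance. -/
def l1 {α : Type*} [Fintype α] (u v : α → ℝ) : ℝ := ∑ a, |u a - v a|

/-- Payoff functions bounded by 1. -/
def Bounded1 {K I J : Type*} (g : K → I → J → ℝ) : Prop := ∀ k i j, |g k i j| ≤ 1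

/-- The value-based distance: sup over all finite zero-sum games (with nonempty
finite action sets, payoffs bounded by 1) of the absolute difference of values. -/
def valueDist {K C D C' D' : Type*} [Fintype K] [Fintype C] [Fintype D] [Fintype C'] [Fintype D']
    (u : K × C × D → ℝ) (v : K × C' × D' → ℝ) : ℝ :=
  sSup {x : ℝ | ∃ (m n : ℕ) (g : K → Fin (m + 1) → Fin (n + 1) → ℝ),
    Bounded1 g ∧ x = |gameVal u g - gameVal v g|}

/-- Value of a single-agent decision problem on a single-agent information structure. -/
def val1 {K C I : Type*} [Fintype K] [Fintype C] [Fintype I] [Nonempty I]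
    (u : K × C → ℝ) (g : K → I → ℝ) : ℝ :=
  ∑ c, ⨆ i, ∑ k, u (k, c) * g k i

/-- The single-agent value-based distance. -/
def valueDist1 {K C C' : Type*} [Fintype K] [Fintype C] [Fintype C']
    (u : K × C → ℝ) (v : K × C' → ℝ) : ℝ :=
  sSup {x : ℝ | ∃ (m : ℕ) (g : K → Fin (m + 1) → ℝ),
    (∀ k i, |g k i| ≤ 1) ∧ x = |val1 u g - val1 v g|}

/-- Garbling of the signal in a single-agent structure. -/
def garble1 {K C C' : Type*} [Fintype C] (q : C → C' → ℝ) (u : K × C → ℝ) : K × C' → ℝ :=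
  fun x => ∑ c, u (x.1, c) * q c x.2

end

/-!
Upper bound: for a payoff `g` with `|g| ≤ 1`, `val1 · g` is 1-Lipschitz for the ℓ¹ distance, and
garbling a structure can only lower its value; hence
`val1 u g - val1 v g ≤ val1 u g - val1 (q'.v) g ≤ ‖u - q'.v‖₁` for every garbling `q'`.

Lower bound: the garblings of `u` form a compact convex set, at ℓ¹ distance `δ` from `v`,
attained at `q`. Separating it from the open ℓ¹ ball of radius `δ` around `v` yields `φ` with
`|φ| ≤ 1` and `⟪w, φ⟫ + δ ≤ ⟪v, φ⟫` for every garbling `w` of `u`. Read as a decision problem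
whose actions are the signals, `φ` is worth at least `⟪v, φ⟫` under `v`, while under `u` it is
worth `⟪r.u, φ⟫` for the deterministic garbling `r` that maps each signal to an optimal action.
-/

open Finset

section Kernel

variable {α β : Type*} [Fintype β]

lemma setOf_isKernel_eq_pi :
    {q : α → β → ℝ | IsKernel q} = Set.univ.pi fun _ => stdSimplex ℝ β := by
  ext q
  simp [IsKernel, IsDist, stdSimplex, Set.mem_pi]

lemma isKernel_pi_single [DecidableEq β] (b : α → β) :
    IsKernel fun a => Pi.single (b a) (1 : ℝ) :=
  fun a => ⟨fun b' => by by_cases h : b' = b a <;> simp [h], by simp⟩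

end Kernel

section L1

variable {α : Type*} [Fintype α]

lemma l1_comm (u v : α → ℝ) : l1 u v = l1 v u := by
  simp only [l1, abs_sub_comm]

lemma continuous_l1_left (v : α → ℝ) : Continuous fun w => l1 w v := by
  unfold l1
  fun_prop

lemma convexOn_l1_left (v : α → ℝ) : ConvexOn ℝ Set.univ fun w => l1 w v := by
  refine ⟨convex_univ, fun w₁ _ w₂ _ a b ha hb hab => ?_⟩
  simp only [l1, smul_eq_mul, mul_sum, ← sum_add_distrib]
  refine sum_le_sum fun x _ => ?_
  calc |(a • w₁ + b • w₂) x - v x| = |a * (w₁ x - v x) + b * (w₂ x - v x)| := by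
        congr 1
        simp only [Pi.add_apply, Pi.smul_apply, smul_eq_mul]
        linear_combination v x * hab
    _ ≤ a * |w₁ x - v x| + b * |w₂ x - v x| := by
        simpa only [abs_mul, abs_of_nonneg ha, abs_of_nonneg hb] using
          abs_add_le (a * (w₁ x - v x)) (b * (w₂ x - v x))

end L1

section Separation

variable {α : Type*} [Fintype α]

lemma add_mul_abs_le_of_forall_l1_lt {v ψ : α → ℝ} {δ c : ℝ} (hδ : 0 < δ)
    (h : ∀ w, l1 w v < δ → ∑ b, w b * ψ b < c) (a : α) :
    ∑ b, v b * ψ b + δ * |ψ a| ≤ c := by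
  classical
  have hlt : ∀ t ∈ Set.Ico 0 δ, ∑ b, v b * ψ b + t * |ψ a| ≤ c := by
    rintro t ⟨ht₀, htδ⟩
    set s := if 0 ≤ ψ a then t else -t
    have hs : |s| = t ∧ s * ψ a = t * |ψ a| := by
      by_cases hψ : 0 ≤ ψ a
      · simp [s, hψ, abs_of_nonneg ht₀, abs_of_nonneg hψ]
      · simp [s, hψ, abs_of_nonneg ht₀, abs_of_neg (not_le.1 hψ)]
    have hw := h (v + Pi.single a s) <| by
      simpa [l1, Pi.single_apply, apply_ite (· - v _), apply_ite abs, hs.1] using htδ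
    simp only [Pi.add_apply, add_mul, sum_add_distrib, Pi.single_apply, ite_mul, zero_mul,
      sum_ite_eq', mem_univ, if_true, hs.2] at hw
    exact hw.le
  have hclosed : IsClosed {t : ℝ | ∑ b, v b * ψ b + t * |ψ a| ≤ c} :=
    isClosed_le (by fun_prop) continuous_const
  refine (hclosed.closure_subset_iff.2 hlt) ?_
  rw [closure_Ico hδ.ne]
  exact ⟨hδ.le, le_rfl⟩

lemma exists_sum_mul_add_le_of_le_l1 {S : Set (α → ℝ)} (hS : Convex ℝ S) (v : α → ℝ) {δ : ℝ}
    (hSv : ∀ s ∈ S, δ ≤ l1 s v) :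
    ∃ φ : α → ℝ, (∀ a, |φ a| ≤ 1) ∧ ∀ s ∈ S, ∑ a, s a * φ a + δ ≤ ∑ a, v a * φ a := by
  classical
  rcases le_or_gt δ 0 with hδ | hδ
  · exact ⟨0, by simp, fun s _ => by simpa using hδ⟩
  rcases S.eq_empty_or_nonempty with rfl | ⟨s₀, hs₀⟩
  · exact ⟨0, by simp, by simp⟩
  have hB : Convex ℝ {w | l1 w v < δ} := by
    simpa using (convexOn_l1_left v).convex_lt δ
  have hdisj : Disjoint {w | l1 w v < δ} S :=
    Set.disjoint_left.2 fun w hw hwS => (hSv w hwS).not_gt hw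
  obtain ⟨f, c, hfB, hfS⟩ :=
    geometric_hahn_banach_open hB (isOpen_lt (continuous_l1_left v) continuous_const) hS hdisj
  set ψ : α → ℝ := fun a => f (Pi.single a 1)
  have hf : ∀ w, f w = ∑ a, w a * ψ a := fun w => by
    have hsingle : ∀ a : α, (fun j => if a = j then (1 : ℝ) else 0) = Pi.single a 1 := fun a => by
      ext j; simp [Pi.single_apply, eq_comm]
    simpa [hsingle] using f.toLinearMap.pi_apply_eq_sum_univ w
  simp only [hf] at hfB hfS
  have hball := add_mul_abs_le_of_forall_l1_lt hδ hfB
  have hα : Nonempty α := by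
    by_contra hempty
    simp only [not_nonempty_iff] at hempty
    simpa [l1] using (hδ.trans_le (hSv s₀ hs₀))
  obtain ⟨a₀, ha₀⟩ := Finite.exists_max fun a => |ψ a|
  have hM : 0 < |ψ a₀| := by
    by_contra! hM
    have hψ : ψ = 0 := funext fun a => abs_nonpos_iff.1 ((ha₀ a).trans hM)
    have h₁ := hfB v (by simpa [l1] using hδ)
    have h₂ := hfS s₀ hs₀
    simp only [hψ, Pi.zero_apply, mul_zero, sum_const_zero] at h₁ h₂
    linarith
  refine ⟨fun a => -ψ a / |ψ a₀|, fun a => ?_, fun s hs => ?_⟩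
  · rw [abs_div, abs_neg, abs_abs, div_le_one hM]
    exact ha₀ a
  · have hsψ := hfS s hs
    have hvψ := hball a₀
    simp only [mul_div_assoc', mul_neg, neg_div, ← sum_div, sum_neg_distrib]
    field_simp
    linarith

end Separation

lemma convex_image_garble1 {K C : Type*} [Fintype C] (u : K × C → ℝ) :
    Convex ℝ ((fun q => garble1 q u) '' {q : C → C → ℝ | IsKernel q}) := by
  rw [setOf_isKernel_eq_pi]
  refine (convex_pi fun _ _ => convex_stdSimplex ℝ C).is_linear_image
    ⟨fun q r => ?_, fun a q => ?_⟩
  all_goals ext x; simp [garble1, sum_add_distrib, mul_sum, mul_add, mul_left_comm]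

section Garbling

variable {K C : Type*} [Fintype K] [Fintype C]

lemma continuous_l1_garble1 (u v : K × C → ℝ) :
    Continuous fun q : C → C → ℝ => l1 (garble1 q u) v := by
  unfold l1 garble1
  fun_prop

lemma sum_garble1_pi_single_mul {C' : Type*} [Fintype C'] [DecidableEq C'] (b : C → C')
    (u : K × C → ℝ) (φ : K × C' → ℝ) :
    ∑ a, garble1 (fun c => Pi.single (b c) (1 : ℝ)) u a * φ a =
      ∑ c, ∑ k, u (k, c) * φ (k, b c) := by
  simp only [garble1, Fintype.sum_prod_type, sum_mul, Pi.single_apply, mul_ite, mul_one, mul_zero,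
    ite_mul, zero_mul]
  conv_rhs => rw [sum_comm]
  refine sum_congr rfl fun k _ => ?_
  rw [sum_comm]
  simp

lemma exists_forall_l1_garble1_le (u v : K × C → ℝ) :
    ∃ q : C → C → ℝ, IsKernel q ∧
      ∀ r : C → C → ℝ, IsKernel r → l1 (garble1 q u) v ≤ l1 (garble1 r u) v := by
  classical
  have hcompact : IsCompact {q : C → C → ℝ | IsKernel q} := by
    rw [setOf_isKernel_eq_pi]
    exact isCompact_univ_pi fun _ => isCompact_stdSimplex ℝ C
  obtain ⟨q, hq, hmin⟩ := hcompact.exists_isMinOn ⟨_, isKernel_pi_single id⟩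
    (continuous_l1_garble1 u v).continuousOn
  exact ⟨q, hq, fun r hr => hmin hr⟩

section Val1

variable {I : Type*} [Fintype I] [Nonempty I]

lemma val1_le_add_l1 (w v : K × C → ℝ) {g : K → I → ℝ} (hg : ∀ k i, |g k i| ≤ 1) :
    val1 w g ≤ val1 v g + l1 w v := by
  rw [val1, val1, l1, Fintype.sum_prod_type_right, ← sum_add_distrib]
  refine sum_le_sum fun c _ => ciSup_le fun i => ?_
  calc ∑ k, w (k, c) * g k i
      = ∑ k, v (k, c) * g k i + ∑ k, (w (k, c) - v (k, c)) * g k i := by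
        rw [← sum_add_distrib]; exact sum_congr rfl fun k _ => by ring
    _ ≤ (⨆ i, ∑ k, v (k, c) * g k i) + ∑ k, |w (k, c) - v (k, c)| := by
        gcongr with k
        · exact Finite.le_ciSup_of_le i le_rfl
        · calc (w (k, c) - v (k, c)) * g k i ≤ |(w (k, c) - v (k, c)) * g k i| := le_abs_self _
            _ ≤ |w (k, c) - v (k, c)| := by
              rw [abs_mul]; exact mul_le_of_le_one_right (abs_nonneg _) (hg k i)

lemma abs_val1_sub_le_l1 (w v : K × C → ℝ) {g : K → I → ℝ} (hg : ∀ k i, |g k i| ≤ 1) :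
    |val1 w g - val1 v g| ≤ l1 w v := by
  have h₁ := val1_le_add_l1 w v hg
  have h₂ := val1_le_add_l1 v w hg
  rw [l1_comm] at h₂
  exact abs_sub_le_iff.2 ⟨by linarith, by linarith⟩

lemma val1_garble1_le {q : C → C → ℝ} (hq : IsKernel q) (u : K × C → ℝ) (g : K → I → ℝ) :
    val1 (garble1 q u) g ≤ val1 u g := by
  calc val1 (garble1 q u) g
      ≤ ∑ c', ∑ c, q c c' * ⨆ i, ∑ k, u (k, c) * g k i := by
        refine sum_le_sum fun c' _ => ciSup_le fun i => ?_
        calc ∑ k, garble1 q u (k, c') * g k i = ∑ c, q c c' * ∑ k, u (k, c) * g k i := by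
              simp only [garble1, sum_mul, mul_sum]
              rw [sum_comm]
              exact sum_congr rfl fun c _ => sum_congr rfl fun k _ => by ring
          _ ≤ _ := by
              gcongr with c
              · exact (hq c).1 c'
              · exact Finite.le_ciSup_of_le i le_rfl
    _ = val1 u g := by
        rw [sum_comm, val1]
        exact sum_congr rfl fun c _ => by rw [← sum_mul, (hq c).2, one_mul]

lemma val1_comp_equiv {J : Type*} [Fintype J] [Nonempty J] (e : I ≃ J) (u : K × C → ℝ)
    (g : K → I → ℝ) : val1 u (fun k j => g k (e.symm j)) = val1 u g := by
  simp only [val1]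
  exact sum_congr rfl fun c _ => e.symm.iSup_comp (g := fun i => ∑ k, u (k, c) * g k i)

lemma sum_mul_le_val1 (u : K × C → ℝ) (g : K → I → ℝ) (b : C → I) :
    ∑ c, ∑ k, u (k, c) * g k (b c) ≤ val1 u g :=
  sum_le_sum fun c _ => Finite.le_ciSup_of_le (b c) le_rfl

lemma exists_val1_eq_sum (u : K × C → ℝ) (g : K → I → ℝ) :
    ∃ b : C → I, val1 u g = ∑ c, ∑ k, u (k, c) * g k (b c) := by
  choose b hb using fun c => Finite.exists_max fun i => ∑ k, u (k, c) * g k i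
  exact ⟨b, (sum_le_sum fun c _ => ciSup_le (hb c)).antisymm (sum_mul_le_val1 u g b)⟩

end Val1

lemma exists_l1_garble1_le_val1_sub [Nonempty C] (u v : K × C → ℝ) {q : C → C → ℝ}
    (hmin : ∀ r : C → C → ℝ, IsKernel r → l1 (garble1 q u) v ≤ l1 (garble1 r u) v) :
    ∃ g : K → C → ℝ, (∀ k c, |g k c| ≤ 1) ∧ l1 (garble1 q u) v ≤ val1 v g - val1 u g := by
  classical
  obtain ⟨φ, hφ, hsep⟩ := exists_sum_mul_add_le_of_le_l1 (convex_image_garble1 u) v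
    (δ := l1 (garble1 q u) v) (by rintro _ ⟨r, hr, rfl⟩; exact hmin r hr)
  refine ⟨fun k c => φ (k, c), fun k c => hφ _, ?_⟩
  obtain ⟨b, hb⟩ := exists_val1_eq_sum u fun k c => φ (k, c)
  have hu : val1 u (fun k c => φ (k, c)) + l1 (garble1 q u) v ≤ ∑ a, v a * φ a := by
    rw [hb, ← sum_garble1_pi_single_mul]
    exact hsep _ ⟨_, isKernel_pi_single b, rfl⟩
  have hv : ∑ a, v a * φ a ≤ val1 v fun k c => φ (k, c) := by
    rw [Fintype.sum_prod_type_right]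
    exact sum_mul_le_val1 v (fun k c => φ (k, c)) id
  linarith

lemma valueDist1_comm (u v : K × C → ℝ) : valueDist1 u v = valueDist1 v u := by
  simp only [valueDist1, abs_sub_comm]

lemma abs_val1_sub_le_valueDist1 {I : Type*} [Fintype I] [Nonempty I] (u v : K × C → ℝ)
    {g : K → I → ℝ} (hg : ∀ k i, |g k i| ≤ 1) : |val1 u g - val1 v g| ≤ valueDist1 u v := by
  obtain ⟨m, hm⟩ := Nat.exists_eq_succ_of_ne_zero (Fintype.card_ne_zero (α := I))
  let e : I ≃ Fin (m + 1) := (Fintype.equivFin I).trans (finCongr hm)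
  refine le_csSup ⟨l1 u v, ?_⟩ ⟨m, fun k j => g k (e.symm j), fun k j => hg _ _, ?_⟩
  · rintro _ ⟨m, g, hg, rfl⟩
    exact abs_val1_sub_le_l1 u v hg
  · rw [val1_comp_equiv, val1_comp_equiv]

lemma valueDist1_le_max {q q' : C → C → ℝ} (hq : IsKernel q) (hq' : IsKernel q')
    (u v : K × C → ℝ) :
    valueDist1 u v ≤ max (l1 (garble1 q u) v) (l1 (garble1 q' v) u) := by
  refine csSup_le ⟨_, 0, fun _ _ => 0, by simp, rfl⟩ ?_
  rintro _ ⟨m, g, hg, rfl⟩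
  have h₁ := val1_le_add_l1 u (garble1 q' v) hg
  have h₂ := val1_le_add_l1 v (garble1 q u) hg
  have h₃ := val1_garble1_le hq u g
  have h₄ := val1_garble1_le hq' v g
  rw [l1_comm] at h₁ h₂
  exact abs_sub_le_iff.2 ⟨by linarith [le_max_right (l1 (garble1 q u) v) (l1 (garble1 q' v) u)],
    by linarith [le_max_left (l1 (garble1 q u) v) (l1 (garble1 q' v) u)]⟩

lemma l1_garble1_le_valueDist1 (u v : K × C → ℝ) {q : C → C → ℝ}
    (hmin : ∀ r : C → C → ℝ, IsKernel r → l1 (garble1 q u) v ≤ l1 (garble1 r u) v) :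
    l1 (garble1 q u) v ≤ valueDist1 u v := by
  cases isEmpty_or_nonempty C
  · have hzero : l1 (garble1 q u) v = 0 := by simp [l1]
    exact hzero ▸ (abs_nonneg _).trans
      (abs_val1_sub_le_valueDist1 u v (g := fun (_ : K) (_ : Unit) => (0 : ℝ)) (by simp))
  · obtain ⟨g, hg, hl1⟩ := exists_l1_garble1_le_val1_sub u v hmin
    have hdist := abs_val1_sub_le_valueDist1 u v hg
    rw [abs_sub_comm] at hdist
    exact hl1.trans ((le_abs_self _).trans hdist)

end Garbling

theorem stmt13_general {K C : Type*} [Fintype K] [Fintype C]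
    (u v : K × C → ℝ) :
    ∃ (q q' : C → C → ℝ), IsKernel q ∧ IsKernel q' ∧
      (∀ r : C → C → ℝ, IsKernel r → l1 (garble1 q u) v ≤ l1 (garble1 r u) v) ∧
      (∀ r : C → C → ℝ, IsKernel r → l1 (garble1 q' v) u ≤ l1 (garble1 r v) u) ∧
      valueDist1 u v = max (l1 (garble1 q u) v) (l1 (garble1 q' v) u) := by
  obtain ⟨q, hq, hqmin⟩ := exists_forall_l1_garble1_le u v
  obtain ⟨q', hq', hq'min⟩ := exists_forall_l1_garble1_le v u
  refine ⟨q, q', hq, hq', hqmin, hq'min, (valueDist1_le_max hq hq' u v).antisymm (max_le ?_ ?_)⟩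
  · exact l1_garble1_le_valueDist1 u v hqmin
  · exact valueDist1_comm u v ▸ l1_garble1_le_valueDist1 v u hq'min

theorem stmt13 {K C : Type*} [Fintype K] [Fintype C]
    (u v : K × C → ℝ) (hu : IsDist u) (hv : IsDist v) :
    ∃ (q q' : C → C → ℝ), IsKernel q ∧ IsKernel q' ∧
      (∀ r : C → C → ℝ, IsKernel r → l1 (garble1 q u) v ≤ l1 (garble1 r u) v) ∧
      (∀ r : C → C → ℝ, IsKernel r → l1 (garble1 q' v) u ≤ l1 (garble1 r v) u) ∧
      valueDist1 u v = max (l1 (garble1 q u) v) (l1 (garble1 q' v) u) :=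
  stmt13_general u v
end

section
/- Let u_n ∈ Δ(K × C_n × D_n) be the sequence of structures where the state k ∈ {0,1}, pairs of signals are uniform over a set of 2(n+1) pairs such that player 2's signals 0 and n+1 reveal the state and no other signal reveals anything, and each player's signal is 1/(n+1)-independent from the state. Let u be the structure with no information (trivial signals, uniform state). Then d(u_n, u) ≤ 2/(n+1); in particular d(u_n,u) → 0. -/
open scoped BigOperators

/-- The structure `u_n`: the state is binary, the 2(n+1) pairs of signals
`(i, i)` (state 0) and `(i, i+1)` (state 1), `i = 0,…,n`, are uniform. -/
noncomputable def uSeq (n : ℕ) : Fin 2 × Fin (n + 1) × Fin (n + 2) → ℝ := fun x =>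
  if (x.1 = 0 ∧ (x.2.2 : ℕ) = (x.2.1 : ℕ)) ∨ (x.1 = 1 ∧ (x.2.2 : ℕ) = (x.2.1 : ℕ) + 1)
  then 1 / (2 * ((n : ℝ) + 1)) else 0

/-- The trivial structure: uniform binary state, no information. -/
noncomputable def uTriv : Fin 2 × Fin 1 × Fin 1 → ℝ := fun _ => 1 / 2

/-!
Compare `u` with `noInfo p`, the structure with the same law `p` of the state and no signals.
Against a player 1 strategy `σ` in `u`, player 2 may ignore his signal; the payoff is then the one
of the average of `σ` in `noInfo p`, up to the defect `∑ k c, |P(k,c) - P(k) P(c)|` of player 1's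
signal, so `val u ≤ val (noInfo p) + defect₁`. Letting player 1 ignore his signal instead gives
`val (noInfo p) ≤ val u + defect₂`. In `u_n` player 1's signal is independent of the state, and
the defect of player 2's signal, `1 / (n + 1)`, comes from the two revealing signals `0`, `n + 1`.
-/

open Finset

section MixedPay

variable {K C D I J : Type*} [Fintype C] [Fintype D] [Fintype I] [Fintype J]

def mixedPay (g : K → I → J → ℝ) (k : K) (s : I → ℝ) (t : J → ℝ) : ℝ :=
  ∑ i, ∑ j, s i * t j * g k i j

lemma pay_eq_sum_mixedPay [Fintype K] (u : K × C × D → ℝ) (g : K → I → J → ℝ)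
    (σ : C → I → ℝ) (τ : D → J → ℝ) :
    pay u g σ τ = ∑ k, ∑ c, ∑ d, u (k, c, d) * mixedPay g k (σ c) (τ d) := by
  simp only [pay, mixedPay, mul_sum, mul_assoc]

lemma abs_mixedPay_le_one {g : K → I → J → ℝ} (hg : Bounded1 g) (k : K) {s : I → ℝ}
    {t : J → ℝ} (hs : IsDist s) (ht : IsDist t) : |mixedPay g k s t| ≤ 1 :=
  calc |mixedPay g k s t| ≤ ∑ i, ∑ j, s i * t j := by
        refine (abs_sum_le_sum_abs _ _).trans (sum_le_sum fun i _ => ?_)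
        refine (abs_sum_le_sum_abs _ _).trans (sum_le_sum fun j _ => ?_)
        rw [abs_mul, abs_of_nonneg (mul_nonneg (hs.1 i) (ht.1 j))]
        exact mul_le_of_le_one_right (mul_nonneg (hs.1 i) (ht.1 j)) (hg k i j)
    _ = 1 := by rw [← sum_mul_sum, hs.2, ht.2, one_mul]

def averageStrategy (w : C → ℝ) (σ : C → I → ℝ) : Fin 1 → I → ℝ :=
  fun _ i => ∑ c, w c * σ c i

lemma IsKernel.averageStrategy {w : C → ℝ} {σ : C → I → ℝ} (hw : IsDist w)
    (hσ : IsKernel σ) : IsKernel (averageStrategy w σ) := fun _ =>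
  ⟨fun i => sum_nonneg fun c _ => mul_nonneg (hw.1 c) ((hσ c).1 i), by
    simp only [_root_.averageStrategy]
    rw [sum_comm]
    simp [← mul_sum, (hσ _).2, hw.2]⟩

lemma mixedPay_averageStrategy_left (g : K → I → J → ℝ) (k : K) (w : C → ℝ)
    (σ : C → I → ℝ) (t : J → ℝ) :
    mixedPay g k (averageStrategy w σ 0) t = ∑ c, w c * mixedPay g k (σ c) t := by
  simp only [mixedPay, averageStrategy, mul_sum, sum_mul]
  rw [sum_comm_cycle]
  refine sum_congr rfl fun c _ => sum_congr rfl fun i _ => sum_congr rfl fun j _ => ?_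
  ring

lemma mixedPay_averageStrategy_right (g : K → I → J → ℝ) (k : K) (s : I → ℝ) (w : D → ℝ)
    (τ : D → J → ℝ) :
    mixedPay g k s (averageStrategy w τ 0) = ∑ d, w d * mixedPay g k s (τ d) := by
  simp only [mixedPay, averageStrategy, mul_sum, sum_mul]
  rw [sum_comm_cycle]
  refine sum_congr rfl fun d _ => sum_congr rfl fun i _ => sum_congr rfl fun j _ => ?_
  ring

end MixedPay

lemma exists_isKernel (α : Type*) {β : Type*} [Fintype β] [Nonempty β] :
    ∃ q : α → β → ℝ, IsKernel q :=
  ⟨fun _ _ => 1 / Fintype.card β, fun _ => ⟨fun _ => by positivity, by simp⟩⟩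

section GameValue

variable {K C D I J : Type*} [Fintype K] [Fintype C] [Fintype D] [Fintype I] [Fintype J]
  {u : K × C × D → ℝ} {g : K → I → J → ℝ}

lemma abs_pay_le (hg : Bounded1 g) {σ : C → I → ℝ} {τ : D → J → ℝ} (hσ : IsKernel σ)
    (hτ : IsKernel τ) : |pay u g σ τ| ≤ ∑ k, ∑ c, ∑ d, |u (k, c, d)| := by
  rw [pay_eq_sum_mixedPay]
  refine (abs_sum_le_sum_abs _ _).trans (sum_le_sum fun k _ => ?_)
  refine (abs_sum_le_sum_abs _ _).trans (sum_le_sum fun c _ => ?_)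
  refine (abs_sum_le_sum_abs _ _).trans (sum_le_sum fun d _ => ?_)
  rw [abs_mul]
  exact mul_le_of_le_one_right (abs_nonneg _) (abs_mixedPay_le_one hg k (hσ c) (hτ d))

/-- `gameVal u g` is by definition the supremum of `guarantee u g σ` over strategies `σ`. -/
noncomputable def guarantee (u : K × C × D → ℝ) (g : K → I → J → ℝ) (σ : C → I → ℝ) : ℝ :=
  sInf {y | ∃ τ : D → J → ℝ, IsKernel τ ∧ y = pay u g σ τ}

lemma guarantee_le_pay (hg : Bounded1 g) {σ : C → I → ℝ} {τ : D → J → ℝ} (hσ : IsKernel σ)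
    (hτ : IsKernel τ) : guarantee u g σ ≤ pay u g σ τ := by
  refine csInf_le ⟨-∑ k, ∑ c, ∑ d, |u (k, c, d)|, ?_⟩ ⟨τ, hτ, rfl⟩
  rintro _ ⟨τ', hτ', rfl⟩
  exact neg_le_of_abs_le (abs_pay_le hg hσ hτ')

lemma le_guarantee [Nonempty J] {σ : C → I → ℝ} {a : ℝ}
    (h : ∀ τ : D → J → ℝ, IsKernel τ → a ≤ pay u g σ τ) : a ≤ guarantee u g σ := by
  obtain ⟨τ, hτ⟩ := exists_isKernel D (β := J)
  refine le_csInf ⟨_, τ, hτ, rfl⟩ ?_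
  rintro _ ⟨τ', hτ', rfl⟩
  exact h τ' hτ'

lemma guarantee_le_gameVal [Nonempty J] (hg : Bounded1 g) {σ : C → I → ℝ} (hσ : IsKernel σ) :
    guarantee u g σ ≤ gameVal u g := by
  obtain ⟨τ, hτ⟩ := exists_isKernel D (β := J)
  refine le_csSup ⟨∑ k, ∑ c, ∑ d, |u (k, c, d)|, ?_⟩ ⟨σ, hσ, rfl⟩
  rintro _ ⟨σ', hσ', rfl⟩
  exact (guarantee_le_pay hg hσ' hτ).trans (le_of_abs_le (abs_pay_le hg hσ' hτ))

lemma gameVal_le [Nonempty I] {a : ℝ}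
    (h : ∀ σ : C → I → ℝ, IsKernel σ → guarantee u g σ ≤ a) : gameVal u g ≤ a := by
  obtain ⟨σ, hσ⟩ := exists_isKernel C (β := I)
  refine csSup_le ⟨_, σ, hσ, rfl⟩ ?_
  rintro _ ⟨σ', hσ', rfl⟩
  exact h σ' hσ'

theorem gameVal_le_add_of_forall_exists [Nonempty I] [Nonempty J] {C' D' : Type*} [Fintype C']
    [Fintype D'] {v : K × C' × D' → ℝ} (hg : Bounded1 g) {ε : ℝ}
    (h : ∀ σ : C → I → ℝ, IsKernel σ → ∃ σ' : C' → I → ℝ, IsKernel σ' ∧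
      ∀ τ' : D' → J → ℝ, IsKernel τ' → ∃ τ : D → J → ℝ, IsKernel τ ∧
        pay u g σ τ ≤ pay v g σ' τ' + ε) :
    gameVal u g ≤ gameVal v g + ε := by
  refine gameVal_le fun σ hσ => ?_
  obtain ⟨σ', hσ', hσσ'⟩ := h σ hσ
  have : guarantee u g σ - ε ≤ guarantee v g σ' := le_guarantee fun τ' hτ' => by
    obtain ⟨τ, hτ, hττ'⟩ := hσσ' τ' hτ'
    linarith [guarantee_le_pay (u := u) hg hσ hτ]
  linarith [guarantee_le_gameVal (u := v) hg hσ']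

end GameValue

section NoInformation

variable {K C D : Type*} [Fintype K] [Fintype C] [Fintype D]

def stateMarginal (u : K × C × D → ℝ) (k : K) : ℝ := ∑ c, ∑ d, u (k, c, d)

def signal1Marginal (u : K × C × D → ℝ) (c : C) : ℝ := ∑ k, ∑ d, u (k, c, d)

def signal2Marginal (u : K × C × D → ℝ) (d : D) : ℝ := ∑ k, ∑ c, u (k, c, d)

/-- A player's signal is `ε`-independent of the state iff his `indepDefect` is at most `ε`. -/
def indepDefect1 (u : K × C × D → ℝ) : ℝ :=
  ∑ k, ∑ c, |∑ d, u (k, c, d) - stateMarginal u k * signal1Marginal u c|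

def indepDefect2 (u : K × C × D → ℝ) : ℝ :=
  ∑ k, ∑ d, |∑ c, u (k, c, d) - stateMarginal u k * signal2Marginal u d|

def noInfo (p : K → ℝ) : K × Fin 1 × Fin 1 → ℝ := fun x => p x.1

lemma indepDefect1_nonneg (u : K × C × D → ℝ) : 0 ≤ indepDefect1 u :=
  sum_nonneg fun _ _ => sum_nonneg fun _ _ => abs_nonneg _

lemma IsDist.sum_sum_sum {u : K × C × D → ℝ} (hu : IsDist u) :
    ∑ k, ∑ c, ∑ d, u (k, c, d) = 1 := by
  simpa only [Fintype.sum_prod_type] using hu.2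

lemma isDist_signal1Marginal {u : K × C × D → ℝ} (hu : IsDist u) :
    IsDist (signal1Marginal u) := by
  refine ⟨fun c => sum_nonneg fun k _ => sum_nonneg fun d _ => hu.1 _, ?_⟩
  simp only [signal1Marginal]
  rw [sum_comm, hu.sum_sum_sum]

lemma isDist_signal2Marginal {u : K × C × D → ℝ} (hu : IsDist u) :
    IsDist (signal2Marginal u) := by
  refine ⟨fun d => sum_nonneg fun k _ => sum_nonneg fun c _ => hu.1 _, ?_⟩
  simp only [signal2Marginal]
  rw [← sum_comm_cycle, hu.sum_sum_sum]

lemma abs_sum_sum_mul_le {A B : Type*} [Fintype A] [Fintype B] (x y : A → B → ℝ)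
    (hy : ∀ a b, |y a b| ≤ 1) : |∑ a, ∑ b, x a b * y a b| ≤ ∑ a, ∑ b, |x a b| := by
  refine (abs_sum_le_sum_abs _ _).trans (sum_le_sum fun a _ => ?_)
  refine (abs_sum_le_sum_abs _ _).trans (sum_le_sum fun b _ => ?_)
  rw [abs_mul]
  exact mul_le_of_le_one_right (abs_nonneg _) (hy a b)

variable {I J : Type*} [Fintype I] [Fintype J] {g : K → I → J → ℝ}

lemma pay_noInfo (p : K → ℝ) (g : K → I → J → ℝ) (σ : Fin 1 → I → ℝ) (τ : Fin 1 → J → ℝ) :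
    pay (noInfo p) g σ τ = ∑ k, p k * mixedPay g k (σ 0) (τ 0) := by
  simp [pay_eq_sum_mixedPay, noInfo]

lemma abs_pay_sub_pay_noInfo_le_indepDefect1 (u : K × C × D → ℝ) (hg : Bounded1 g)
    {σ : C → I → ℝ} (hσ : IsKernel σ) {τ : Fin 1 → J → ℝ} (hτ : IsKernel τ) :
    |pay u g σ (fun _ => τ 0) -
        pay (noInfo (stateMarginal u)) g (averageStrategy (signal1Marginal u) σ) τ|
      ≤ indepDefect1 u := by
  have hdiff : pay u g σ (fun _ => τ 0) -
      pay (noInfo (stateMarginal u)) g (averageStrategy (signal1Marginal u) σ) τ =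
      ∑ k, ∑ c, (∑ d, u (k, c, d) - stateMarginal u k * signal1Marginal u c) *
        mixedPay g k (σ c) (τ 0) := by
    rw [pay_noInfo, pay_eq_sum_mixedPay]
    simp only [mixedPay_averageStrategy_left, sub_mul, sum_sub_distrib, sum_mul, mul_sum,
      mul_assoc]
  rw [hdiff]
  exact abs_sum_sum_mul_le _ _ fun k c => abs_mixedPay_le_one hg k (hσ c) (hτ 0)

lemma abs_pay_sub_pay_noInfo_le_indepDefect2 (u : K × C × D → ℝ) (hg : Bounded1 g)
    {σ : Fin 1 → I → ℝ} (hσ : IsKernel σ) {τ : D → J → ℝ} (hτ : IsKernel τ) :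
    |pay u g (fun _ => σ 0) τ -
        pay (noInfo (stateMarginal u)) g σ (averageStrategy (signal2Marginal u) τ)|
      ≤ indepDefect2 u := by
  have hdiff : pay u g (fun _ => σ 0) τ -
      pay (noInfo (stateMarginal u)) g σ (averageStrategy (signal2Marginal u) τ) =
      ∑ k, ∑ d, (∑ c, u (k, c, d) - stateMarginal u k * signal2Marginal u d) *
        mixedPay g k (σ 0) (τ d) := by
    rw [pay_noInfo, pay_eq_sum_mixedPay]
    simp only [mixedPay_averageStrategy_right, sub_mul, sum_sub_distrib, sum_mul, mul_assoc]
    rw [sum_congr rfl fun k _ => sum_comm (s := univ (α := C))]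
    simp only [mul_sum]
  rw [hdiff]
  exact abs_sum_sum_mul_le _ _ fun k d => abs_mixedPay_le_one hg k (hσ 0) (hτ d)

variable [Nonempty I] [Nonempty J] {u : K × C × D → ℝ}

theorem gameVal_le_gameVal_noInfo_add (hu : IsDist u) (hg : Bounded1 g) :
    gameVal u g ≤ gameVal (noInfo (stateMarginal u)) g + indepDefect1 u :=
  gameVal_le_add_of_forall_exists hg fun σ hσ =>
    ⟨averageStrategy (signal1Marginal u) σ, hσ.averageStrategy (isDist_signal1Marginal hu),
      fun τ hτ => ⟨fun _ => τ 0, fun _ => hτ 0, sub_le_iff_le_add'.mp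
        (abs_sub_le_iff.mp (abs_pay_sub_pay_noInfo_le_indepDefect1 u hg hσ hτ)).1⟩⟩

theorem gameVal_noInfo_le_gameVal_add (hu : IsDist u) (hg : Bounded1 g) :
    gameVal (noInfo (stateMarginal u)) g ≤ gameVal u g + indepDefect2 u :=
  gameVal_le_add_of_forall_exists hg fun σ hσ =>
    ⟨fun _ => σ 0, fun _ => hσ 0, fun τ hτ =>
      ⟨averageStrategy (signal2Marginal u) τ, hτ.averageStrategy (isDist_signal2Marginal hu),
        sub_le_iff_le_add'.mp
          (abs_sub_le_iff.mp (abs_pay_sub_pay_noInfo_le_indepDefect2 u hg hσ hτ)).2⟩⟩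

theorem abs_gameVal_sub_gameVal_noInfo_le (hu : IsDist u) (hg : Bounded1 g) :
    |gameVal u g - gameVal (noInfo (stateMarginal u)) g| ≤
      max (indepDefect1 u) (indepDefect2 u) := by
  have h₁ := gameVal_le_gameVal_noInfo_add hu hg
  have h₂ := gameVal_noInfo_le_gameVal_add hu hg
  have h₁' := le_max_left (indepDefect1 u) (indepDefect2 u)
  have h₂' := le_max_right (indepDefect1 u) (indepDefect2 u)
  exact abs_sub_le_iff.mpr ⟨by linarith, by linarith⟩

end NoInformation

theorem valueDist_noInfo_le {K C D : Type*} [Fintype K] [Fintype C] [Fintype D]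
    {u : K × C × D → ℝ} (hu : IsDist u) :
    valueDist u (noInfo (stateMarginal u)) ≤ max (indepDefect1 u) (indepDefect2 u) := by
  refine Real.sSup_le ?_ (le_max_of_le_left (indepDefect1_nonneg u))
  rintro _ ⟨m, n, g, hg, rfl⟩
  exact abs_gameVal_sub_gameVal_noInfo_le hu hg

theorem valueDist_nonneg {K C D C' D' : Type*} [Fintype K] [Fintype C] [Fintype D] [Fintype C']
    [Fintype D'] (u : K × C × D → ℝ) (v : K × C' × D' → ℝ) : 0 ≤ valueDist u v :=
  Real.sSup_nonneg fun _ ⟨_, _, _, _, hx⟩ => hx ▸ abs_nonneg _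

lemma abs_sub_half_add_add_abs_sub_half_add (x y : ℝ) :
    |x - 1 / 2 * (x + y)| + |y - 1 / 2 * (x + y)| = |x - y| := by
  rw [show x - 1 / 2 * (x + y) = (x - y) / 2 by ring,
    show y - 1 / 2 * (x + y) = -((x - y) / 2) by ring, abs_neg, abs_div]
  norm_num

section uSeq

variable (n : ℕ)

lemma uSeq_zero (c : Fin (n + 1)) (d : Fin (n + 2)) :
    uSeq n (0, c, d) = if d = c.castSucc then 1 / (2 * ((n : ℝ) + 1)) else 0 := by
  simp [uSeq, Fin.ext_iff]

lemma uSeq_one (c : Fin (n + 1)) (d : Fin (n + 2)) :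
    uSeq n (1, c, d) = if d = c.succ then 1 / (2 * ((n : ℝ) + 1)) else 0 := by
  simp [uSeq, Fin.ext_iff]

lemma sum_uSeq_over_signal2 (k : Fin 2) (c : Fin (n + 1)) :
    ∑ d, uSeq n (k, c, d) = 1 / (2 * ((n : ℝ) + 1)) := by
  fin_cases k <;> simp [uSeq_zero, uSeq_one]

lemma sum_uSeq_zero_over_signal1 (d : Fin (n + 2)) :
    ∑ c, uSeq n (0, c, d) = if d = Fin.last _ then 0 else 1 / (2 * ((n : ℝ) + 1)) := by
  induction d using Fin.lastCases with
  | last => simp [uSeq_zero, (Fin.castSucc_lt_last _).ne']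
  | cast d => simp [uSeq_zero, (Fin.castSucc_lt_last d).ne]

lemma sum_uSeq_one_over_signal1 (d : Fin (n + 2)) :
    ∑ c, uSeq n (1, c, d) = if d = 0 then 0 else 1 / (2 * ((n : ℝ) + 1)) := by
  induction d using Fin.cases with
  | zero => simp [uSeq_one, (Fin.succ_pos _).ne]
  | succ d => simp [uSeq_one]

lemma isDist_uSeq : IsDist (uSeq n) := by
  refine ⟨fun x => by unfold uSeq; positivity, ?_⟩
  simp only [Fintype.sum_prod_type, sum_uSeq_over_signal2, sum_const, card_univ,
    Fintype.card_fin, nsmul_eq_mul]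
  push_cast
  field_simp

lemma stateMarginal_uSeq : stateMarginal (uSeq n) = fun _ => 1 / 2 := by
  ext k
  simp only [stateMarginal, sum_uSeq_over_signal2, sum_const, card_univ, Fintype.card_fin,
    nsmul_eq_mul]
  push_cast
  field_simp

lemma noInfo_stateMarginal_uSeq : noInfo (stateMarginal (uSeq n)) = uTriv := by
  rw [stateMarginal_uSeq]
  rfl

lemma indepDefect1_uSeq : indepDefect1 (uSeq n) = 0 := by
  simp [indepDefect1, signal1Marginal, stateMarginal_uSeq, sum_uSeq_over_signal2]

lemma indepDefect2_uSeq : indepDefect2 (uSeq n) = 1 / ((n : ℝ) + 1) := by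
  have hd : ∀ d : Fin (n + 2),
      |∑ c, uSeq n (0, c, d) - ∑ c, uSeq n (1, c, d)| =
        (if d = 0 then 1 / (2 * ((n : ℝ) + 1)) else 0) +
          if d = Fin.last _ then 1 / (2 * ((n : ℝ) + 1)) else 0 := by
    intro d
    rw [sum_uSeq_zero_over_signal1, sum_uSeq_one_over_signal1]
    by_cases h0 : d = 0 <;> by_cases hl : d = Fin.last _ <;> simp [h0, hl] <;> positivity
  simp only [indepDefect2, signal2Marginal, stateMarginal_uSeq, Fin.sum_univ_two]
  rw [← sum_add_distrib]
  simp only [abs_sub_half_add_add_abs_sub_half_add, hd, sum_add_distrib, sum_ite_eq', mem_univ,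
    if_true]
  field_simp
  ring

end uSeq

theorem stmt18 :
    (∀ n : ℕ, valueDist (uSeq n) uTriv ≤ 2 / ((n : ℝ) + 1)) ∧
      Filter.Tendsto (fun n : ℕ => valueDist (uSeq n) uTriv) Filter.atTop (nhds 0) := by
  have hbound : ∀ n : ℕ, valueDist (uSeq n) uTriv ≤ 2 / ((n : ℝ) + 1) := fun n => by
    have hdist := valueDist_noInfo_le (isDist_uSeq n)
    rw [noInfo_stateMarginal_uSeq, indepDefect1_uSeq, indepDefect2_uSeq] at hdist
    refine hdist.trans (max_le (by positivity) ?_)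
    gcongr
    norm_num
  have hlim : Filter.Tendsto (fun n : ℕ => 2 / ((n : ℝ) + 1)) Filter.atTop (nhds 0) := by
    simpa [div_eq_mul_inv] using (tendsto_one_div_add_atTop_nhds_zero_nat (𝕜 := ℝ)).const_mul 2
  exact ⟨hbound, squeeze_zero (fun n => valueDist_nonneg _ _) hbound hlim⟩
end
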